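/- Operator norm of the contraction map of the Oja iteration. Let d > p ≥ 1 and λ_1 ≥ λ_2 ≥ … ≥ λ_d ≥ 0 with γ := λ_p − λ_{p+1} > 0; set Λ̄ := diag(λ_1,…,λ_p) and Λ̲ := diag(λ_{p+1},…,λ_d). Let η > 0 satisfy η·λ_1 ≤ 1, and define the linear map 𝓛 : ℝ^{(d−p)×p} → ℝ^{(d−p)×p} by 𝓛T := T + η(Λ̲T − TΛ̄). Then 𝓛T = L ∘ T, where L ∈ ℝ^{(d−p)×p} has entries L_{ij} = 1 + η(λ_{p+i} − λ_j) and ∘ is the entrywise product, and for ‖·‖ being either the spectral norm or the Frobenius norm, the induced operator norm sup_{T ≠ 0} ‖𝓛T‖/‖T‖ equals 1 − ηγ. -/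

import Mathlib

open Matrix

/-!
Writing `𝓛T = (ηΛ̲) T + T (I − ηΛ̄)`, the condition `ηλ₁ ≤ 1` makes both diagonal factors
nonnegative, with largest entries `ηλ_{p+1}` and `1 − ηλ_p`. For the spectral norm the triangle
inequality and submultiplicativity, and for the Frobenius norm the entrywise bound
`|L_{ij}| ≤ ηλ_{p+1} + 1 − ηλ_p`, give `‖𝓛T‖ ≤ (1 − ηγ)‖T‖`. The bound is attained at the matrix
unit `E_{1p}`, which `𝓛` scales by exactly `1 − ηγ`.
-/

/-- Frobenius norm of a real matrix. -/
noncomputable def frobNorm {m n : ℕ} (A : Matrix (Fin m) (Fin n) ℝ) : ℝ :=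
  Real.sqrt (∑ i, ∑ j, A i j ^ 2)

/-- Spectral norm (ℓ²-operator norm) of a real matrix. -/
noncomputable def specNorm {m n : ℕ} (A : Matrix (Fin m) (Fin n) ℝ) : ℝ :=
  sSup {c : ℝ | ∃ x : Fin n → ℝ, ∑ j, x j ^ 2 ≤ 1 ∧ c = Real.sqrt (∑ i, (A.mulVec x) i ^ 2)}

theorem Matrix.diagonal_mul_single {m n α : Type*} [Fintype m] [DecidableEq m] [DecidableEq n]
    [NonUnitalNonAssocSemiring α] (s : m → α) (i : m) (j : n) (c : α) :
    diagonal s * single i j c = single i j (s i * c) := by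
  ext i' j'
  rw [diagonal_mul]
  by_cases h : i = i' ∧ j = j'
  · obtain ⟨rfl, rfl⟩ := h
    simp
  · simp [single_apply_of_ne _ _ _ _ _ h]

theorem Matrix.single_mul_diagonal {m n α : Type*} [Fintype n] [DecidableEq m] [DecidableEq n]
    [NonUnitalNonAssocSemiring α] (t : n → α) (i : m) (j : n) (c : α) :
    single i j c * diagonal t = single i j (c * t j) := by
  ext i' j'
  rw [mul_diagonal]
  by_cases h : i = i' ∧ j = j'
  · obtain ⟨rfl, rfl⟩ := h
    simp
  · simp [single_apply_of_ne _ _ _ _ _ h]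

theorem Matrix.add_smul_diagonal_mul_sub_mul_diagonal_apply {m n R : Type*} [Fintype m]
    [Fintype n] [DecidableEq m] [DecidableEq n] [CommRing R] (η : R) (μ : m → R) (ν : n → R)
    (T : Matrix m n R) (i : m) (j : n) :
    (T + η • (diagonal μ * T - T * diagonal ν)) i j = (1 + η * (μ i - ν j)) * T i j := by
  simp only [add_apply, smul_apply, sub_apply, diagonal_mul, mul_diagonal, smul_eq_mul]
  ring

theorem Matrix.add_smul_diagonal_mul_sub_mul_diagonal {m n R : Type*} [Fintype m]
    [Fintype n] [DecidableEq m] [DecidableEq n] [CommRing R] (η : R) (μ : m → R) (ν : n → R)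
    (T : Matrix m n R) :
    T + η • (diagonal μ * T - T * diagonal ν) =
      diagonal (η • μ) * T + T * diagonal (1 - η • ν) := by
  ext i j
  rw [add_smul_diagonal_mul_sub_mul_diagonal_apply, add_apply, diagonal_mul, mul_diagonal]
  simp only [Pi.smul_apply, Pi.sub_apply, Pi.one_apply, smul_eq_mul]
  ring

theorem isGreatest_ratio_of_le_of_eq_smul {E : Type*} [Zero E] [SMul ℝ E] {N : E → ℝ}
    (hN_smul : ∀ (c : ℝ) x, N (c • x) = |c| * N x) (hN_pos : ∀ x, x ≠ 0 → 0 < N x)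
    {f : E → E} {K : ℝ} (hK : 0 ≤ K) (hf : ∀ x, N (f x) ≤ K * N x)
    {x₀ : E} (hx₀ : x₀ ≠ 0) (hfx₀ : f x₀ = K • x₀) :
    IsGreatest {c | ∃ x, x ≠ 0 ∧ c = N (f x) / N x} K := by
  refine ⟨⟨x₀, hx₀, ?_⟩, ?_⟩
  · rw [hfx₀, hN_smul, abs_of_nonneg hK, mul_div_cancel_right₀ _ (hN_pos x₀ hx₀).ne']
  · rintro c ⟨x, hx, rfl⟩
    exact div_le_of_le_mul₀ (hN_pos x hx).le hK (hf x)

section L2Operator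
open scoped Matrix.Norms.L2Operator

theorem specNorm_eq_l2_opNorm {m n : ℕ} (A : Matrix (Fin m) (Fin n) ℝ) : specNorm A = ‖A‖ := by
  rw [l2_opNorm_def, ← ContinuousLinearMap.sSup_unitClosedBall_eq_norm, specNorm]
  congr 1
  ext c
  simp only [Set.mem_ofPred_eq, Set.mem_image, Metric.mem_closedBall, dist_zero_right]
  constructor
  · rintro ⟨x, hx, rfl⟩
    refine ⟨WithLp.toLp 2 x, ?_, ?_⟩
    · simpa [EuclideanSpace.norm_eq] using hx
    · simp [EuclideanSpace.norm_eq]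
  · rintro ⟨x, hx, rfl⟩
    refine ⟨x.ofLp, ?_, ?_⟩
    · simpa [EuclideanSpace.norm_eq] using hx
    · simp [EuclideanSpace.norm_eq]

theorem specNorm_smul {m n : ℕ} (c : ℝ) (A : Matrix (Fin m) (Fin n) ℝ) :
    specNorm (c • A) = |c| * specNorm A := by
  rw [specNorm_eq_l2_opNorm, specNorm_eq_l2_opNorm, norm_smul, Real.norm_eq_abs]

theorem specNorm_pos {m n : ℕ} {A : Matrix (Fin m) (Fin n) ℝ} (hA : A ≠ 0) : 0 < specNorm A := by
  rw [specNorm_eq_l2_opNorm]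
  exact norm_pos_iff.mpr hA

theorem specNorm_diagonal_mul_add_mul_diagonal_le {m n : ℕ} {s : Fin m → ℝ} {t : Fin n → ℝ}
    {a b : ℝ} (ha : 0 ≤ a) (hb : 0 ≤ b) (hs : ∀ i, |s i| ≤ a) (ht : ∀ j, |t j| ≤ b)
    (T : Matrix (Fin m) (Fin n) ℝ) :
    specNorm (diagonal s * T + T * diagonal t) ≤ (a + b) * specNorm T := by
  have hs' : ‖s‖ ≤ a := (pi_norm_le_iff_of_nonneg ha).mpr hs
  have ht' : ‖t‖ ≤ b := (pi_norm_le_iff_of_nonneg hb).mpr ht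
  simp only [specNorm_eq_l2_opNorm]
  calc ‖diagonal s * T + T * diagonal t‖
      ≤ ‖diagonal s‖ * ‖T‖ + ‖T‖ * ‖diagonal t‖ :=
        (norm_add_le _ _).trans (add_le_add (l2_opNorm_mul _ _) (l2_opNorm_mul _ _))
    _ ≤ (a + b) * ‖T‖ := by
        rw [l2_opNorm_diagonal, l2_opNorm_diagonal]
        nlinarith [norm_nonneg T]

end L2Operator

section Frobenius
open scoped Matrix.Norms.Frobenius

theorem frobNorm_eq_frobenius_norm {m n : ℕ} (A : Matrix (Fin m) (Fin n) ℝ) :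
    frobNorm A = ‖A‖ := by
  simp [frobenius_norm_def, frobNorm, Real.sqrt_eq_rpow]

theorem frobNorm_smul {m n : ℕ} (c : ℝ) (A : Matrix (Fin m) (Fin n) ℝ) :
    frobNorm (c • A) = |c| * frobNorm A := by
  rw [frobNorm_eq_frobenius_norm, frobNorm_eq_frobenius_norm, norm_smul, Real.norm_eq_abs]

theorem frobNorm_pos {m n : ℕ} {A : Matrix (Fin m) (Fin n) ℝ} (hA : A ≠ 0) : 0 < frobNorm A := by
  rw [frobNorm_eq_frobenius_norm]
  exact norm_pos_iff.mpr hA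

end Frobenius

theorem frobNorm_le_of_abs_le {m n : ℕ} {B T : Matrix (Fin m) (Fin n) ℝ} {K : ℝ} (hK : 0 ≤ K)
    (h : ∀ i j, |B i j| ≤ K * |T i j|) : frobNorm B ≤ K * frobNorm T := by
  rw [frobNorm, frobNorm, ← Real.sqrt_sq hK, ← Real.sqrt_mul (sq_nonneg K), Finset.mul_sum]
  gcongr with i _
  rw [Finset.mul_sum]
  gcongr with j _
  rw [← sq_abs, ← sq_abs (T i j), ← mul_pow]
  exact pow_le_pow_left₀ (abs_nonneg _) (h i j) 2

theorem frobNorm_diagonal_mul_add_mul_diagonal_le {m n : ℕ} {s : Fin m → ℝ} {t : Fin n → ℝ}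
    {a b : ℝ} (ha : 0 ≤ a) (hb : 0 ≤ b) (hs : ∀ i, |s i| ≤ a) (ht : ∀ j, |t j| ≤ b)
    (T : Matrix (Fin m) (Fin n) ℝ) :
    frobNorm (diagonal s * T + T * diagonal t) ≤ (a + b) * frobNorm T := by
  refine frobNorm_le_of_abs_le (add_nonneg ha hb) fun i j => ?_
  rw [Matrix.add_apply, diagonal_mul, mul_diagonal, mul_comm (T i j), ← add_mul, abs_mul]
  gcongr
  exact (abs_add_le _ _).trans (add_le_add (hs i) (ht j))

/-- Operator norm of the contraction map `𝓛T = T + η(Λ̲T − TΛ̄)` of the Oja iteration: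
`𝓛` acts as the Hadamard product with the matrix `L_{ij} = 1 + η(λ_{p+i} − λ_j)`, and
its operator norm induced by either the spectral or the Frobenius norm equals `1 − ηγ`. -/
theorem oja_contraction_operator_norm (d p : ℕ) (hp : 1 ≤ p) (hpd : p < d)
    (lam : Fin d → ℝ) (hmono : Antitone lam) (hpos : ∀ i, 0 ≤ lam i)
    (η : ℝ) (hη : 0 < η) (hetaLam : η * lam ⟨0, by omega⟩ ≤ 1) :
    let γ : ℝ := lam ⟨p - 1, by omega⟩ - lam ⟨p, hpd⟩
    let calL : Matrix (Fin (d - p)) (Fin p) ℝ → Matrix (Fin (d - p)) (Fin p) ℝ :=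
      fun T => T + η •
        (Matrix.diagonal (fun i : Fin (d - p) => lam ⟨p + i, by have := i.isLt; omega⟩) * T
          - T * Matrix.diagonal (fun j : Fin p => lam (Fin.castLE hpd.le j)))
    (∀ (T : Matrix (Fin (d - p)) (Fin p) ℝ) (i : Fin (d - p)) (j : Fin p),
        calL T i j =
          (1 + η * (lam ⟨p + i, by have := i.isLt; omega⟩ - lam (Fin.castLE hpd.le j))) * T i j) ∧
    IsGreatest {c : ℝ | ∃ T : Matrix (Fin (d - p)) (Fin p) ℝ,
        T ≠ 0 ∧ c = specNorm (calL T) / specNorm T} (1 - η * γ) ∧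
    IsGreatest {c : ℝ | ∃ T : Matrix (Fin (d - p)) (Fin p) ℝ,
        T ≠ 0 ∧ c = frobNorm (calL T) / frobNorm T} (1 - η * γ) := by
  intro γ calL
  set μ : Fin (d - p) → ℝ := fun i => lam ⟨p + i, by have := i.isLt; omega⟩
  set ν : Fin p → ℝ := fun j => lam (Fin.castLE hpd.le j)
  have hsplit (T) : calL T = diagonal (η • μ) * T + T * diagonal (1 - η • ν) :=
    add_smul_diagonal_mul_sub_mul_diagonal η μ ν T
  have hμ (i) : |(η • μ) i| ≤ η * lam ⟨p, hpd⟩ := by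
    rw [Pi.smul_apply, smul_eq_mul, abs_of_nonneg (mul_nonneg hη.le (hpos _))]
    exact mul_le_mul_of_nonneg_left (hmono (Fin.mk_le_mk.mpr (by omega))) hη.le
  have hν (j) : |(1 - η • ν) j| ≤ 1 - η * lam ⟨p - 1, by omega⟩ := by
    have hle : η * ν j ≤ 1 :=
      (mul_le_mul_of_nonneg_left (hmono (by simp [Fin.le_def])) hη.le).trans hetaLam
    have hge : lam ⟨p - 1, by omega⟩ ≤ ν j := hmono (by simp [Fin.le_def]; omega)
    rw [Pi.sub_apply, Pi.smul_apply, smul_eq_mul, Pi.one_apply, abs_of_nonneg (by linarith)]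
    nlinarith
  have ha : 0 ≤ η * lam ⟨p, hpd⟩ := mul_nonneg hη.le (hpos _)
  have hb : 0 ≤ 1 - η * lam ⟨p - 1, by omega⟩ := (abs_nonneg _).trans (hν ⟨p - 1, by omega⟩)
  have hK : η * lam ⟨p, hpd⟩ + (1 - η * lam ⟨p - 1, by omega⟩) = 1 - η * γ := by ring
  have hK₀ : 0 ≤ 1 - η * γ := hK ▸ add_nonneg ha hb
  set T₀ : Matrix (Fin (d - p)) (Fin p) ℝ := single ⟨0, by omega⟩ ⟨p - 1, by omega⟩ 1
  have hT₀ : T₀ ≠ 0 := fun h => one_ne_zero (α := ℝ) <| by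
    simpa [T₀] using congrFun₂ h ⟨0, by omega⟩ ⟨p - 1, by omega⟩
  have hLT₀ : calL T₀ = (1 - η * γ) • T₀ := by
    rw [hsplit, diagonal_mul_single, single_mul_diagonal, ← single_add, smul_single, ← hK]
    simp [μ, ν]
  refine ⟨add_smul_diagonal_mul_sub_mul_diagonal_apply η μ ν, ?_, ?_⟩
  · refine isGreatest_ratio_of_le_of_eq_smul specNorm_smul (fun _ => specNorm_pos)
      hK₀ (fun T => ?_) hT₀ hLT₀
    rw [hsplit, ← hK]
    exact specNorm_diagonal_mul_add_mul_diagonal_le ha hb hμ hν T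
  · refine isGreatest_ratio_of_le_of_eq_smul frobNorm_smul (fun _ => frobNorm_pos)
      hK₀ (fun T => ?_) hT₀ hLT₀
    rw [hsplit, ← hK]
    exact frobNorm_diagonal_mul_add_mul_diagonal_le ha hb hμ hν T
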